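/- Let K, B ⊂ ℝ² be convex bodies in general relative position, meaning dim F(K,u) + dim F(B,u) ≤ 1 for every unit vector u, and assume 0 ∈ int B. Then for every x ∈ ℝ² \ K there exist a unique point p ∈ bd K and a unique vector b ∈ bd B such that x = p + d(K,B,x)·b, where d(K,B,x) = min{r ≥ 0 : x ∈ K + rB}. -/

import Mathlib

/-! The infimum `d` defining `bDist K B x` is attained by compactness, and `d > 0` since `x ∉ K`.
Minimality of `d` puts `x` on the boundary of the convex body `K + d • B`: if `x` were interior,
pushing it away from a point `k₀ ∈ K` would give `x ∈ K + (d / s) • B` for some `s > 1`. A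
supporting line of `K + d • B` at `x` with outer unit normal `u` forces every decomposition
`x = p + d • b` with `p ∈ K`, `b ∈ B` to have `p ∈ F(K, u)` and `b ∈ F(B, u)`. These faces lie
in the boundaries, and general relative position makes one of them a single point, which pins
down the decomposition. -/

open scoped Pointwise

noncomputable section

def suppSet {n : ℕ} (L : Set (EuclideanSpace ℝ (Fin n))) (u : EuclideanSpace ℝ (Fin n)) :
    Set (EuclideanSpace ℝ (Fin n)) :=
  {x ∈ L | ∀ y ∈ L, inner ℝ u y ≤ (inner ℝ u x : ℝ)}

/-- Affine dimension of a subset. -/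
def adim {n : ℕ} (s : Set (EuclideanSpace ℝ (Fin n))) : ℕ :=
  Module.finrank ℝ (affineSpan ℝ s).direction

def bDist {n : ℕ} (K B : Set (EuclideanSpace ℝ (Fin n))) (x : EuclideanSpace ℝ (Fin n)) : ℝ :=
  sInf {r : ℝ | 0 ≤ r ∧ x ∈ K + r • B}

open Set Filter Topology

section Minkowski

variable {E : Type*} [AddCommGroup E] [Module ℝ E]

theorem isClosed_setOf_mem_add_smul [TopologicalSpace E] [ContinuousAdd E]
    [ContinuousSMul ℝ E] [T2Space E] {K B : Set E} (hK : IsCompact K) (hB : IsCompact B) (x : E) :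
    IsClosed {r : ℝ | x ∈ K + r • B} := by
  have : CompactSpace (K ×ˢ B) := isCompact_iff_compactSpace.mp (hK.prod hB)
  convert isClosedMap_fst_of_compactSpace _ (isClosed_eq (by fun_prop) continuous_const :
    IsClosed {p : ℝ × (K ×ˢ B) | (p.2 : E × E).1 + p.1 • (p.2 : E × E).2 = x})
  ext r
  constructor
  · rintro ⟨k, hk, _, ⟨b, hb, rfl⟩, hx⟩
    exact ⟨(r, ⟨(k, b), hk, hb⟩), hx, rfl⟩
  · rintro ⟨⟨r, ⟨⟨k, b⟩, hk, hb⟩⟩, hx, rfl⟩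
    exact ⟨k, hk, _, ⟨b, hb, rfl⟩, hx⟩

theorem mem_add_div_smul_of_add_smul_sub_mem {K B : Set E} (hK : Convex ℝ K) {k₀ x : E}
    (hk₀ : k₀ ∈ K) {r s : ℝ} (hs : 1 ≤ s) (h : k₀ + s • (x - k₀) ∈ K + r • B) :
    x ∈ K + (r / s) • B := by
  obtain ⟨k, hk, _, ⟨b, hb, rfl⟩, hkb : k + r • b = k₀ + s • (x - k₀)⟩ := h
  have hs0 : s ≠ 0 := by positivity
  refine ⟨s⁻¹ • k + (1 - s⁻¹) • k₀,
    hK hk hk₀ (by positivity) (sub_nonneg.2 (inv_le_one_of_one_le₀ hs)) (by ring),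
    (r / s) • b, smul_mem_smul_set hb, ?_⟩
  have : x = s⁻¹ • (k + r • b) + (1 - s⁻¹) • k₀ := by
    rw [hkb]; match_scalars <;> field_simp; ring
  rw [this]; match_scalars <;> ring

end Minkowski

theorem exists_norm_eq_one_inner_le_of_notMem_interior {E : Type*} [NormedAddCommGroup E]
    [InnerProductSpace ℝ E] [CompleteSpace E] {A : Set E} {x : E} (hA : Convex ℝ A)
    (hAint : (interior A).Nonempty) (hx : x ∉ interior A) :
    ∃ u : E, ‖u‖ = 1 ∧ ∀ a ∈ A, inner ℝ u a ≤ inner ℝ u x := by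
  obtain ⟨f, hf, hfA⟩ := geometric_hahn_banach_of_nonempty_interior_point hA hx hAint
  set v := (InnerProductSpace.toDual ℝ E).symm f
  have hv : v ≠ 0 := by simpa [v] using hf
  refine ⟨‖v‖⁻¹ • v, norm_smul_inv_norm hv, fun a ha => ?_⟩
  simp only [real_inner_smul_left, v, InnerProductSpace.toDual_symm_apply]
  exact mul_le_mul_of_nonneg_left (hfA a ha) (by positivity)

variable {n : ℕ}

theorem eq_of_mem_of_adim_eq_zero {s : Set (EuclideanSpace ℝ (Fin n))} (h : adim s = 0)
    {p q : EuclideanSpace ℝ (Fin n)} (hp : p ∈ s) (hq : q ∈ s) : p = q := by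
  have hd : (affineSpan ℝ s).direction = ⊥ := Submodule.finrank_eq_zero.mp h
  have := AffineSubspace.vsub_mem_direction (mem_affineSpan ℝ hp) (mem_affineSpan ℝ hq)
  rwa [hd, Submodule.mem_bot, vsub_eq_zero_iff_eq] at this

theorem injOn_add_smul_of_adim_add_adim_le_one {s t : Set (EuclideanSpace ℝ (Fin n))}
    (h : adim s + adim t ≤ 1) {d : ℝ} (hd : d ≠ 0) :
    InjOn (fun pb : EuclideanSpace ℝ (Fin n) × EuclideanSpace ℝ (Fin n) => pb.1 + d • pb.2)
      (s ×ˢ t) := by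
  rintro ⟨p, b⟩ ⟨hp, hb⟩ ⟨q, c⟩ ⟨hq, hc⟩ (hpq : p + d • b = q + d • c)
  rcases (by omega : adim s = 0 ∨ adim t = 0) with hs | ht
  · obtain rfl := eq_of_mem_of_adim_eq_zero hs hp hq
    rw [smul_right_injective _ hd (add_left_cancel hpq)]
  · obtain rfl := eq_of_mem_of_adim_eq_zero ht hb hc
    rw [add_right_cancel hpq]

theorem suppSet_subset_frontier {L : Set (EuclideanSpace ℝ (Fin n))}
    {u : EuclideanSpace ℝ (Fin n)} (hu : u ≠ 0) : suppSet L u ⊆ frontier L := by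
  rintro p ⟨hpL, hmax⟩
  refine ⟨subset_closure hpL, fun hp => hu ?_⟩
  have hloc : IsLocalMax (fun y => inner ℝ u y) p :=
    mem_of_superset (mem_interior_iff_mem_nhds.mp hp) hmax
  simpa using congr($(hloc.hasFDerivAt_eq_zero (innerSL ℝ u).hasFDerivAt) u)

theorem mem_suppSet_of_add_smul_mem_suppSet {K B : Set (EuclideanSpace ℝ (Fin n))}
    {u p b : EuclideanSpace ℝ (Fin n)} {d : ℝ} (hp : p ∈ K) (hb : b ∈ B) (hd : 0 < d)
    (h : p + d • b ∈ suppSet (K + d • B) u) : p ∈ suppSet K u ∧ b ∈ suppSet B u := by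
  have hmax := h.2
  simp only [inner_add_right, real_inner_smul_right] at hmax
  refine ⟨⟨hp, fun y hy => ?_⟩, ⟨hb, fun y hy => ?_⟩⟩
  · have := hmax _ (add_mem_add hy (smul_mem_smul_set hb))
    simp only [inner_add_right, real_inner_smul_right] at this
    linarith
  · have := hmax _ (add_mem_add hp (smul_mem_smul_set hy))
    simp only [inner_add_right, real_inner_smul_right] at this
    nlinarith

theorem bDist_mem_add_smul {K B : Set (EuclideanSpace ℝ (Fin n))} (hK : IsCompact K)
    (hKne : K.Nonempty) (hB : IsCompact B) (hB0 : B ∈ 𝓝 0) (x : EuclideanSpace ℝ (Fin n)) :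
    x ∈ K + bDist K B x • B := by
  obtain ⟨k₀, hk₀⟩ := hKne
  obtain ⟨r, hr, hrB⟩ := (absorbent_nhds_zero (𝕜 := ℝ) hB0 (x - k₀)).exists_pos
  have hne : {r : ℝ | 0 ≤ r ∧ x ∈ K + r • B}.Nonempty :=
    ⟨r, hr.le, k₀, hk₀, x - k₀, hrB r (Real.norm_of_nonneg hr.le).ge rfl,
      add_sub_cancel k₀ x⟩
  exact ((isClosed_Ici.inter (isClosed_setOf_mem_add_smul hK hB x)).csInf_mem hne
    ⟨0, fun _ h => h.1⟩).2

theorem bDist_pos {K B : Set (EuclideanSpace ℝ (Fin n))} {x : EuclideanSpace ℝ (Fin n)}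
    (hx : x ∉ K) (hBne : B.Nonempty) (hmem : x ∈ K + bDist K B x • B) : 0 < bDist K B x := by
  refine (Real.sInf_nonneg fun _ h => h.1).lt_of_ne fun h => hx ?_
  rwa [← show (0 : ℝ) = bDist K B x from h, zero_smul_set hBne, add_zero] at hmem

theorem notMem_interior_add_bDist_smul {K B : Set (EuclideanSpace ℝ (Fin n))}
    (hK : Convex ℝ K) (hKne : K.Nonempty) {x : EuclideanSpace ℝ (Fin n)}
    (hd : 0 < bDist K B x) : x ∉ interior (K + bDist K B x • B) := by
  intro hx
  obtain ⟨k₀, hk₀⟩ := hKne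
  have hray : Tendsto (fun s : ℝ => k₀ + s • (x - k₀)) (𝓝[>] 1) (𝓝 x) :=
    ((by fun_prop : Continuous fun s : ℝ => k₀ + s • (x - k₀)).tendsto' 1 x
      (by simp)).mono_left nhdsWithin_le_nhds
  obtain ⟨s, hsx, hs⟩ :=
    ((hray.eventually (isOpen_interior.mem_nhds hx)).and self_mem_nhdsWithin).exists
  replace hs : 1 < s := hs
  have hle : bDist K B x ≤ bDist K B x / s :=
    csInf_le ⟨0, fun _ h => h.1⟩ ⟨by positivity,
      mem_add_div_smul_of_add_smul_sub_mem hK hk₀ (le_of_lt hs) (interior_subset hsx)⟩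
  rw [le_div_iff₀ (by linarith)] at hle
  nlinarith

theorem bProjection_exists_unique (K B : Set (EuclideanSpace ℝ (Fin 2)))
    (hKc : IsCompact K) (hKconv : Convex ℝ K) (hKint : (interior K).Nonempty)
    (hBc : IsCompact B) (hBconv : Convex ℝ B) (hB0 : (0 : EuclideanSpace ℝ (Fin 2)) ∈ interior B)
    (hgrp : ∀ u : EuclideanSpace ℝ (Fin 2), ‖u‖ = 1 → adim (suppSet K u) + adim (suppSet B u) ≤ 1) :
    ∀ x ∉ K, ∃! pb : EuclideanSpace ℝ (Fin 2) × EuclideanSpace ℝ (Fin 2),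
      pb.1 ∈ frontier K ∧ pb.2 ∈ frontier B ∧ x = pb.1 + bDist K B x • pb.2 := by
  intro x hx
  have hKne : K.Nonempty := hKint.mono interior_subset
  have hxS := bDist_mem_add_smul hKc hKne hBc (mem_interior_iff_mem_nhds.mp hB0) x
  set d := bDist K B x
  have hd : 0 < d := bDist_pos hx ⟨0, interior_subset hB0⟩ hxS
  have hSint : (interior (K + d • B)).Nonempty :=
    hKint.mono (interior_mono (subset_add_left K ⟨0, interior_subset hB0, smul_zero d⟩))
  obtain ⟨u, hu, hux⟩ := exists_norm_eq_one_inner_le_of_notMem_interior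
    (hKconv.add (hBconv.smul d)) hSint (notMem_interior_add_bDist_smul hKconv hKne hd)
  have hsupp : ∀ p ∈ K, ∀ b ∈ B, x = p + d • b → p ∈ suppSet K u ∧ b ∈ suppSet B u :=
    fun p hp b hb hxpb => mem_suppSet_of_add_smul_mem_suppSet hp hb hd (hxpb ▸ ⟨hxS, hux⟩)
  have hu0 : u ≠ 0 := by rintro rfl; simp at hu
  obtain ⟨p, hp, _, ⟨b, hb, rfl⟩, hxpb⟩ := hxS
  obtain ⟨hpu, hbu⟩ := hsupp p hp b hb hxpb.symm
  refine ⟨(p, b), ⟨suppSet_subset_frontier hu0 hpu, suppSet_subset_frontier hu0 hbu,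
    hxpb.symm⟩, ?_⟩
  rintro ⟨q, c⟩ ⟨hq, hc, hxqc⟩
  have hqc :=
    hsupp q (hKc.isClosed.frontier_subset hq) c (hBc.isClosed.frontier_subset hc) hxqc
  exact injOn_add_smul_of_adim_add_adim_le_one (hgrp u hu) hd.ne' hqc ⟨hpu, hbu⟩
    (hxqc.symm.trans hxpb.symm)
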